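/- arXiv:1412.1042 — 3 statements merged into one kernel-verified Lean document; each statement's English description precedes it below -/
import Mathlib

section
/- Given a 3-SAT instance C = {c_1,…,c_m} over variables {x_1,…,x_n}, construct a colored tree T_C as follows: an uncolored root r; for each variable x_i, two children x_i and ¬x_i of r, both colored with a fresh color c_{x_i}; for each clause c_j and each literal l occurring in c_j, a node colored with fresh color c_{c_j} attached as a child of the node for the negation of l. Then C is satisfiable if and only if T_C admits a rainbow antichain for the palette consisting of all variable-colors and clause-colors. -/
/-- `u` is a proper ancestor of `v` in the rooted tree described by the parent
function `parent`. -/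
def ProperAnc {V : Type} (parent : V → V) (u v : V) : Prop :=
  ∃ k > 0, parent^[k] v = u

/-- `R` is a rainbow antichain for the tree with parent map `parent`, partially
coloured by `col` over the palette `P`: every colour of `P` has exactly one
representative in `R`, every node of `R` is coloured, and no node of `R` is a
proper ancestor of another. -/
def IsRainbowAntichain {V P : Type} (parent : V → V) (col : V → Option P)
    (R : Finset V) : Prop :=
  (∀ c : P, ∃! v, v ∈ R ∧ col v = some c) ∧
  (∀ v ∈ R, (col v).isSome) ∧
  (∀ u ∈ R, ∀ v ∈ R, u ≠ v → ¬ ProperAnc parent u v)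

/-- A literal over `n` boolean variables: a variable index and a sign
(`true` = positive occurrence). -/
abbrev Lit (n : ℕ) := Fin n × Bool

/-- Value of a literal under a truth assignment. -/
def litVal {n : ℕ} (φ : Fin n → Bool) (l : Lit n) : Bool := φ l.1 == l.2

/-- Negation of a literal. -/
def negLit {n : ℕ} (l : Lit n) : Lit n := (l.1, !l.2)

/-- Nodes of the tree `T_C` built from a 3-SAT instance with `n` variables and `m`
clauses: an (uncoloured) root, a node for each literal, and a node for each
occurrence of a literal in a clause. -/
abbrev SatNode (n m : ℕ) := Unit ⊕ (Lit n ⊕ Fin m × Fin 3)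

/-- The parent map of `T_C`: literal nodes are children of the root, and the node for
the occurrence of a literal `l` in clause `c_j` is a child of the node for `¬l`. -/
def satParent {n m : ℕ} (C : Fin m → Fin 3 → Lit n) : SatNode n m → SatNode n m
  | .inl _ => .inl ()
  | .inr (.inl _) => .inl ()
  | .inr (.inr (j, k)) => .inr (.inl (negLit (C j k)))

/-- The colouring of `T_C` over the palette `Fin n ⊕ Fin m` of variable colours and
clause colours: the root is uncoloured, the two nodes of variable `x_i` get colour
`c_{x_i}`, and the occurrence nodes of clause `c_j` get colour `c_{c_j}`. -/
def satColor {n m : ℕ} : SatNode n m → Option (Fin n ⊕ Fin m)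
  | .inl _ => none
  | .inr (.inl l) => some (.inl l.1)
  | .inr (.inr (j, _)) => some (.inr j)

/-!
A satisfying assignment `φ` gives a rainbow antichain: the literal nodes `(i, φ i)` together with,
in each clause, one occurrence of a true literal. The tree has height two, so the only ancestor
relation between coloured nodes is that of an occurrence of `l` below the node `¬l`, and `¬l` is
not picked because `l` is true. Conversely, the literal nodes of a rainbow antichain define an
assignment, and the occurrence it picks in clause `c_j` must be of a true literal, since otherwise
its parent `¬l` would be a literal node of the antichain.
-/

section RootedTree

variable {V P : Type} {parent : V → V}

lemma properAnc_of_parent_eq {u v : V} (h : parent v = u) : ProperAnc parent u v :=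
  ⟨1, one_pos, h⟩

lemma ProperAnc.eq_parent_or_eq_root {r u v : V} (hr : ∀ w, parent (parent w) = r)
    (h : ProperAnc parent u v) : u = parent v ∨ u = r := by
  have hfix : parent r = r := (congrArg parent (hr r)).symm.trans (hr (parent r))
  obtain ⟨k, hk, rfl⟩ := h
  match k, hk with
  | 1, _ => exact .inl rfl
  | k + 2, _ =>
    right
    rw [Function.iterate_add_apply, show parent^[2] v = r from hr v]
    exact Function.iterate_fixed hfix k

lemma IsRainbowAntichain.exists_mem_col_eq {col : V → Option P} {R : Finset V}
    (hR : IsRainbowAntichain parent col R) (c : P) : ∃ v ∈ R, col v = some c :=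
  (hR.1 c).exists

lemma IsRainbowAntichain.parent_notMem {col : V → Option P} {R : Finset V}
    (hR : IsRainbowAntichain parent col R) {v : V} (hv : v ∈ R) (hne : parent v ≠ v) :
    parent v ∉ R :=
  fun hpv => hR.2.2 _ hpv _ hv hne (properAnc_of_parent_eq rfl)

lemma isRainbowAntichain_image [Fintype P] [DecidableEq V] {col : V → Option P} (f : P → V)
    (hcol : ∀ c, col (f c) = some c)
    (hanti : ∀ c c', c ≠ c' → ¬ ProperAnc parent (f c) (f c')) :
    IsRainbowAntichain parent col (Finset.univ.image f) := by
  refine ⟨fun c => ⟨f c, ⟨by simp, hcol c⟩, ?_⟩, ?_, ?_⟩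
  · rintro _ ⟨hv, hvc⟩
    obtain ⟨c', -, rfl⟩ := Finset.mem_image.1 hv
    rw [Option.some_inj.1 ((hcol c').symm.trans hvc)]
  · simp [hcol]
  · simp only [Finset.mem_image, Finset.mem_univ, true_and]
    rintro _ ⟨c, rfl⟩ _ ⟨c', rfl⟩ hne
    exact hanti c c' (ne_of_apply_ne f hne)

end RootedTree

section Literals

variable {n : ℕ} (φ : Fin n → Bool)

lemma litVal_self (i : Fin n) : litVal φ (i, φ i) = true := by
  simp [litVal]

lemma litVal_negLit (l : Lit n) : litVal φ (negLit l) = !litVal φ l := by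
  obtain ⟨i, b⟩ := l
  simp only [litVal, negLit]
  cases φ i <;> cases b <;> rfl

lemma negLit_eq_of_litVal_eq_false {l : Lit n} (h : litVal φ l = false) :
    negLit l = (l.1, φ l.1) := by
  obtain ⟨i, b⟩ := l
  simp only [litVal, negLit] at h ⊢
  cases hi : φ i <;> cases b <;> simp_all

end Literals

section SatTree

variable {n m : ℕ} (C : Fin m → Fin 3 → Lit n)

lemma satParent_satParent (v : SatNode n m) : satParent C (satParent C v) = .inl () := by
  rcases v with _ | _ | _ <;> rfl

lemma exists_eq_of_satColor_eq_inl {v : SatNode n m} {i : Fin n}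
    (h : satColor v = some (.inl i)) : ∃ b, v = .inr (.inl (i, b)) := by
  rcases v with _ | ⟨i', b⟩ | _ <;> simp_all [satColor]

lemma exists_eq_of_satColor_eq_inr {v : SatNode n m} {j : Fin m}
    (h : satColor v = some (.inr j)) : ∃ t, v = .inr (.inr (j, t)) := by
  rcases v with _ | _ | ⟨j', t⟩ <;> simp_all [satColor]

def satChoice (φ : Fin n → Bool) (k : Fin m → Fin 3) : Fin n ⊕ Fin m → SatNode n m
  | .inl i => .inr (.inl (i, φ i))
  | .inr j => .inr (.inr (j, k j))

lemma isRainbowAntichain_satChoice {φ : Fin n → Bool} {k : Fin m → Fin 3}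
    (hk : ∀ j, litVal φ (C j (k j)) = true) :
    IsRainbowAntichain (satParent C) satColor (Finset.univ.image (satChoice φ k)) := by
  refine isRainbowAntichain_image _ (by rintro (_ | _) <;> rfl) fun c c' _ h => ?_
  rcases h.eq_parent_or_eq_root (satParent_satParent C) with h | h
  · rcases c with i | _ <;> rcases c' with _ | j <;>
      simp only [satChoice, satParent, reduceCtorEq, Sum.inr.injEq, Sum.inl.injEq] at h
    have := litVal_self φ i
    rw [h, litVal_negLit, hk] at this
    exact Bool.false_ne_true this
  · rcases c with _ | _ <;> cases h

lemma IsRainbowAntichain.exists_satisfying {R : Finset (SatNode n m)}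
    (hR : IsRainbowAntichain (satParent C) satColor R) :
    ∃ φ : Fin n → Bool, ∀ j : Fin m, ∃ k : Fin 3, litVal φ (C j k) = true := by
  have hlit (i : Fin n) : ∃ b, (.inr (.inl (i, b)) : SatNode n m) ∈ R := by
    obtain ⟨v, hv, hvc⟩ := hR.exists_mem_col_eq (.inl i)
    obtain ⟨b, rfl⟩ := exists_eq_of_satColor_eq_inl hvc
    exact ⟨b, hv⟩
  choose φ hφ using hlit
  refine ⟨φ, fun j => ?_⟩
  obtain ⟨v, hv, hvc⟩ := hR.exists_mem_col_eq (.inr j)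
  obtain ⟨t, rfl⟩ := exists_eq_of_satColor_eq_inr hvc
  refine ⟨t, by_contra fun hfalse => hR.parent_notMem hv (by simp [satParent]) ?_⟩
  simpa [satParent, negLit_eq_of_litVal_eq_false φ (Bool.eq_false_iff.2 hfalse)]
    using hφ (C j t).1

end SatTree

/-- A 3-SAT instance `C` is satisfiable if and only if the coloured
tree `T_C` admits a rainbow antichain for the palette of all variable colours and
clause colours. -/
theorem threeSat_iff_rainbowAntichain {n m : ℕ} (C : Fin m → Fin 3 → Lit n) :
    (∃ φ : Fin n → Bool, ∀ j : Fin m, ∃ k : Fin 3, litVal φ (C j k) = true)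
      ↔ ∃ R : Finset (SatNode n m), IsRainbowAntichain (satParent C) satColor R := by
  constructor
  · rintro ⟨φ, hφ⟩
    choose k hk using hφ
    exact ⟨_, isRainbowAntichain_satChoice C hk⟩
  · rintro ⟨R, hR⟩
    exact hR.exists_satisfying C
end

section
/- If the tree T_C constructed from a 3-SAT instance C admits a rainbow antichain R, then the assignment φ defined by φ(x_i) = true iff the node x_i belongs to R satisfies every clause of C. -/
/-! The representative of the colour of clause `c_j` is an occurrence node of some literal `l`
of `c_j`. Its parent `¬l` is then excluded from the antichain, so the representative of the colour
of the variable of `l` is the node `l` itself, i.e. `l` is true under `φ`. -/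

namespace IsRainbowAntichain

variable {V P : Type} {parent : V → V} {col : V → Option P} {R : Finset V}

theorem parent_notMem_s3 (hR : IsRainbowAntichain parent col R) {v : V} (hv : v ∈ R)
    (hne : parent v ≠ v) : parent v ∉ R := fun hpv =>
  hR.2.2 _ hpv _ hv hne ⟨1, one_pos, rfl⟩

theorem eq_of_col_eq (hR : IsRainbowAntichain parent col R) {u v : V} {c : P}
    (hu : u ∈ R) (hv : v ∈ R) (huc : col u = some c) (hvc : col v = some c) : u = v :=
  (hR.1 c).unique ⟨hu, huc⟩ ⟨hv, hvc⟩

end IsRainbowAntichain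

section SatTree

variable {n m : ℕ}

theorem satColor_eq_some_inl_iff {v : SatNode n m} {i : Fin n} :
    satColor v = some (.inl i) ↔ ∃ b, v = .inr (.inl (i, b)) := by
  rcases v with _ | ⟨i', b⟩ | _ <;> simp [satColor, eq_comm]

theorem satColor_eq_some_inr_iff {v : SatNode n m} {j : Fin m} :
    satColor v = some (.inr j) ↔ ∃ k, v = .inr (.inr (j, k)) := by
  rcases v with _ | _ | ⟨j', k⟩ <;> simp [satColor, eq_comm]

variable {parent : SatNode n m → SatNode n m} {R : Finset (SatNode n m)}

theorem litNode_mem_or_negLit_mem (hR : IsRainbowAntichain parent satColor R) (l : Lit n) :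
    (.inr (.inl l) : SatNode n m) ∈ R ∨ (.inr (.inl (negLit l)) : SatNode n m) ∈ R := by
  obtain ⟨i, s⟩ := l
  obtain ⟨v, hvR, hvc⟩ := (hR.1 (.inl i)).exists
  obtain ⟨b, rfl⟩ := satColor_eq_some_inl_iff.mp hvc
  cases b <;> cases s <;> simp_all [negLit]

theorem not_litNode_mem_and_negLit_mem (hR : IsRainbowAntichain parent satColor R) (l : Lit n) :
    ¬ ((.inr (.inl l) : SatNode n m) ∈ R ∧ (.inr (.inl (negLit l)) : SatNode n m) ∈ R) :=
  fun ⟨hl, hnl⟩ => by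
    simpa [negLit, Prod.ext_iff] using hR.eq_of_col_eq hl hnl rfl rfl

theorem litVal_eq_true_iff_litNode_mem (hR : IsRainbowAntichain parent satColor R) (l : Lit n) :
    litVal (fun i : Fin n => decide ((.inr (.inl (i, true)) : SatNode n m) ∈ R)) l = true ↔
      (.inr (.inl l) : SatNode n m) ∈ R := by
  obtain ⟨i, _ | _⟩ := l
  · have hor := litNode_mem_or_negLit_mem hR (i, true)
    have hnand := not_litNode_mem_and_negLit_mem hR (i, true)
    simp only [negLit, Bool.not_true] at hor hnand
    simp only [litVal, beq_false, Bool.not_eq_eq_eq_not, Bool.not_true, decide_eq_false_iff_not]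
    tauto
  · simp [litVal]

end SatTree

/-- If `T_C` admits a rainbow antichain `R`, then the assignment
`φ` defined by `φ x_i = true` iff the (positive) literal node `x_i` belongs to `R`
satisfies every clause of `C`. -/
theorem rainbowAntichain_gives_satisfying_assignment {n m : ℕ}
    (C : Fin m → Fin 3 → Lit n) (R : Finset (SatNode n m))
    (hR : IsRainbowAntichain (satParent C) satColor R) :
    ∀ j : Fin m, ∃ k : Fin 3,
      litVal (fun i : Fin n => decide ((Sum.inr (Sum.inl (i, true)) : SatNode n m) ∈ R))
        (C j k) = true := by
  intro j
  obtain ⟨v, hvR, hvc⟩ := (hR.1 (.inr j)).exists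
  obtain ⟨k, rfl⟩ := satColor_eq_some_inr_iff.mp hvc
  refine ⟨k, (litVal_eq_true_iff_litNode_mem hR _).mpr ?_⟩
  have hneg : (.inr (.inl (negLit (C j k))) : SatNode n m) ∉ R :=
    hR.parent_notMem_s3 hvR (by simp [satParent])
  exact (litNode_mem_or_negLit_mem hR _).resolve_right hneg
end

section
/- The gluing constraint of BGE is equivalent to condition BGE-1: for a combined solution (M, N, F) of LGE and PGE with matching node maps, the constraint Σ_{p' ∈ X_G} N_{(v,k),p'} ≤ Σ_{h ∈ prnt_H^*(v), g ∈ n_G} M_{h,g} holds for every host port (v,k) if and only if the corresponding embedding maps satisfy img(φ^i) ⊆ X_H ⊎ {(v,i) ∈ P_H | ∃ s ∈ n_G ∃ k ∈ ℕ : prnt_H^k(v) ∈ φ^s(s)}. -/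
/-- A concrete link graph over a signature `(K, ar)`. -/
structure LinkGraph (K : Type) (ar : K → ℕ) (V E X Y : Type) where
  ctrl : V → K
  link : X ⊕ (Σ v : V, Fin (ar (ctrl v))) → E ⊕ Y

namespace LinkGraph

variable {K : Type} {ar : K → ℕ} {V E X Y : Type}

/-- Ports of a link graph. -/
abbrev Port (G : LinkGraph K ar V E X Y) := Σ v : V, Fin (ar (G.ctrl v))

/-- Points of a link graph: inner names and ports. -/
abbrev Point (G : LinkGraph K ar V E X Y) := X ⊕ G.Port

/-- Number of points linked to a handle. -/
noncomputable def deg (G : LinkGraph K ar V E X Y) (h : E ⊕ Y) : ℕ :=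
  Nat.card {p : G.Point // G.link p = h}

end LinkGraph

/-- The structure maps of a link graph embedding (Def. 7.5.1), together with
control preservation (LGE-6), which is needed to define the induced port map. -/
structure LGPre {K : Type} {ar : K → ℕ} {Vg Eg Xg Yg Vh Eh Xh Yh : Type}
    (G : LinkGraph K ar Vg Eg Xg Yg) (H : LinkGraph K ar Vh Eh Xh Yh) where
  phiV : Vg → Vh
  phiE : Eg → Eh
  phiI : Xg → Set (Xh ⊕ H.Port)
  phiO : Yg → Eh ⊕ Yh
  ctrl_eq : ∀ v, H.ctrl (phiV v) = G.ctrl v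

namespace LGPre

variable {K : Type} {ar : K → ℕ} {Vg Eg Xg Yg Vh Eh Xh Yh : Type}
  {G : LinkGraph K ar Vg Eg Xg Yg} {H : LinkGraph K ar Vh Eh Xh Yh}

/-- Induced port map `φ^port (v,i) = (φ^v v, i)`. -/
def port (φ : LGPre G H) (p : G.Port) : H.Port :=
  ⟨φ.phiV p.1, Fin.cast (congrArg ar (φ.ctrl_eq p.1)).symm p.2⟩

/-- Combined point map `φ^p = φ^i ⊎ φ^port` (singletons for ports). -/
def pointMap (φ : LGPre G H) : G.Point → Set H.Point :=
  Sum.elim (fun x => φ.phiI x) (fun p => {Sum.inr (φ.port p)})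

/-- Combined handle map `φ^h = φ^e ⊎ φ^o`. -/
def handleMap (φ : LGPre G H) : Eg ⊕ Yg → Eh ⊕ Yh :=
  Sum.elim (fun e => Sum.inl (φ.phiE e)) φ.phiO

end LGPre

/-- A link graph embedding (Def. 7.5.1): conditions LGE-1 .. LGE-7. -/
structure LGEmb {K : Type} {ar : K → ℕ} {Vg Eg Xg Yg Vh Eh Xh Yh : Type}
    (G : LinkGraph K ar Vg Eg Xg Yg) (H : LinkGraph K ar Vh Eh Xh Yh)
    extends LGPre G H where
  /-- LGE-1 -/
  injV : Function.Injective phiV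
  /-- LGE-1 -/
  injE : Function.Injective phiE
  /-- LGE-2: `φ^i` is fully injective. -/
  lge2 : ∀ x x', x ≠ x' → phiI x ∩ phiI x' = ∅
  /-- LGE-4: `img φ^e ∩ img φ^o = ∅`. -/
  lge4a : ∀ e y, Sum.inl (phiE e) ≠ phiO y
  /-- LGE-4: `img φ^port ∩ ⋃ img φ^i = ∅`. -/
  lge4b : ∀ (p : G.Port) (x : Xg), Sum.inr (toLGPre.port p) ∉ phiI x
  /-- LGE-5: `φ^p ∘ link_G⁻¹|E_G = link_H⁻¹ ∘ φ^e`. -/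
  lge5 : ∀ (e : Eg) (q : H.Point),
    H.link q = Sum.inl (phiE e) ↔ ∃ p : G.Point, G.link p = Sum.inl e ∧ q ∈ toLGPre.pointMap p
  /-- LGE-7: links are preserved. -/
  lge7 : ∀ (p : G.Point) (q : H.Point), q ∈ toLGPre.pointMap p →
    toLGPre.handleMap (G.link p) = H.link q

open Finset in
/-- The constraint satisfaction problem LGE[G,H] (Figure 3): a solution consists of
network variables `N1` (handle–handle), `N2` (host point to its own handle),
`N3` (host point to guest point) and flux variables `F`, subject to the
constraint families (5)–(20). -/
structure LGESol {K : Type} {ar : K → ℕ} {Vg Eg Xg Yg Vh Eh Xh Yh : Type}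
    [Fintype Vg] [Fintype Eg] [Fintype Xg] [Fintype Yg]
    [Fintype Vh] [Fintype Eh] [Fintype Xh] [Fintype Yh]
    [DecidableEq Vg] [DecidableEq Eg] [DecidableEq Xg] [DecidableEq Yg]
    [DecidableEq Vh] [DecidableEq Eh] [DecidableEq Xh] [DecidableEq Yh]
    (G : LinkGraph K ar Vg Eg Xg Yg) (H : LinkGraph K ar Vh Eh Xh Yh) where
  N1 : (Eg ⊕ Yg) → (Eh ⊕ Yh) → ℕ
  N2 : H.Point → ℕ
  N3 : H.Point → G.Point → ℕ
  F : (Eg ⊕ Yg) → (Eh ⊕ Yh) → ℕ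
  /-- (5): capacity of handle–handle edges. -/
  hN1 : ∀ hg hh, N1 hg hh ≤ H.deg hh
  /-- (6): capacity of point–handle edges. -/
  hN2 : ∀ p, N2 p ≤ 1
  /-- (7): capacity of point–point edges. -/
  hN3 : ∀ p p', N3 p p' ≤ 1
  /-- (8): flux variables are boolean. -/
  hF : ∀ hg hh, F hg hh ≤ 1
  /-- (9): each host point outputs exactly one unit. -/
  c1 : ∀ p : H.Point, N2 p + ∑ p' : G.Point, N3 p p' = 1
  /-- (10): each host handle receives one unit per point it links. -/
  c2 : ∀ hh : Eh ⊕ Yh,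
    (∑ p : H.Point, if H.link p = hh then N2 p else 0) + (∑ hg : Eg ⊕ Yg, N1 hg hh) = H.deg hh
  /-- (11): flux is preserved through the guest linking. -/
  c3 : ∀ hg : Eg ⊕ Yg, (∑ hh : Eh ⊕ Yh, N1 hg hh)
      = ∑ p' : G.Point, if G.link p' = hg then (∑ p : H.Point, N3 p p') else 0
  /-- (12): each guest point receives exactly one unit. -/
  c4 : ∀ p' : G.Point, (∑ p : H.Point, N3 p p') = 1
  /-- (13): host inner names send no flux to guest ports. -/
  c5 : ∀ (x : Xh) (q : G.Port), N3 (Sum.inl x) (Sum.inr q) = 0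
  /-- (14): `N1/deg ≤ F`. -/
  c6a : ∀ hg hh, 0 < G.deg hg → 0 < H.deg hh → N1 hg hh ≤ F hg hh * H.deg hh
  /-- (14): `F ≤ N1`. -/
  c6b : ∀ hg hh, 0 < G.deg hg → 0 < H.deg hh → F hg hh ≤ N1 hg hh
  /-- (15): no point–point flux without handle–handle flux. -/
  c7 : ∀ (hg : Eg ⊕ Yg) (hh : Eh ⊕ Yh) (p : H.Point) (p' : G.Point),
    G.link p' = hg → H.link p = hh → N3 p p' ≤ F hg hh
  /-- (16): no handle–handle flux without point–point flux. -/
  c8 : ∀ (hg : Eg ⊕ Yg) (hh : Eh ⊕ Yh), 0 < G.deg hg ∨ 0 < H.deg hh →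
    F hg hh ≤ ∑ p : H.Point, ∑ p' : G.Point,
      if G.link p' = hg ∧ H.link p = hh then N3 p p' else 0
  /-- (17): each guest handle sends its flux to exactly one host handle. -/
  c9 : ∀ hg : Eg ⊕ Yg, (∑ hh : Eh ⊕ Yh, F hg hh) = 1
  /-- (18): host points cannot bypass a guest edge mapped onto their handle. -/
  c10 : ∀ (e : Eg) (hh : Eh ⊕ Yh) (p : H.Point), H.link p = hh →
    N2 p + F (Sum.inl e) hh ≤ 1
  /-- (19): a host outer name cannot receive from an edge and an outer name. -/
  c11 : ∀ (e : Eg) (y' : Yh) (y : Yg),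
    F (Sum.inl e) (Sum.inr y') + F (Sum.inr y) (Sum.inr y') ≤ 1
  /-- (20 / eq 16): guest edges are not mapped to host outer names. -/
  c12 : ∀ (e : Eg) (y' : Yh), F (Sum.inl e) (Sum.inr y') = 0
  /-- (eq 17): at most one guest handle per host edge. -/
  c13 : ∀ e' : Eh, (∑ hg : Eg ⊕ Yg, F hg (Sum.inl e')) ≤ 1
  /-- (eq 18): mismatching ports of control-matching nodes carry no flux. -/
  c14 : ∀ (v : Vg) (v' : Vh), G.ctrl v = H.ctrl v' →
    ∀ (i : Fin (ar (G.ctrl v))) (i' : Fin (ar (H.ctrl v'))), (i : ℕ) ≠ (i' : ℕ) →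
      N3 (Sum.inr ⟨v', i'⟩) (Sum.inr ⟨v, i⟩) = 0
  /-- (eq 19): ports of control-mismatching nodes carry no flux. -/
  c15 : ∀ (v : Vg) (v' : Vh), G.ctrl v ≠ H.ctrl v' →
    ∀ (i : Fin (ar (G.ctrl v))) (i' : Fin (ar (H.ctrl v'))),
      N3 (Sum.inr ⟨v', i'⟩) (Sum.inr ⟨v, i⟩) = 0
  /-- (eq 20): ports of a node act compactly. -/
  c16 : ∀ (v : Vg) (v' : Vh) (hc : H.ctrl v' = G.ctrl v) (i : Fin (ar (G.ctrl v))),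
    (∑ j : Fin (ar (G.ctrl v)),
        N3 (Sum.inr ⟨v', Fin.cast (congrArg ar hc).symm j⟩) (Sum.inr ⟨v, j⟩))
      = ar (G.ctrl v) * N3 (Sum.inr ⟨v', Fin.cast (congrArg ar hc).symm i⟩) (Sum.inr ⟨v, i⟩)

/-- A concrete place graph over a signature `K`, with `n` sites and `m` roots. -/
structure PlaceGraph (K : Type) (V : Type) (n m : ℕ) where
  ctrl : V → K
  prnt : Fin n ⊕ V → V ⊕ Fin m

/-- Places of a place graph: sites and nodes (the children) together with the roots. -/
abbrev Plc (V : Type) (n m : ℕ) := (Fin n ⊕ V) ⊕ Fin m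

/-- View a parent (node or root) as a place. -/
def parentToPlc {V : Type} {n m : ℕ} : V ⊕ Fin m → Plc V n m :=
  Sum.elim (fun v => Sum.inl (Sum.inr v)) Sum.inr

namespace PlaceGraph

variable {K V : Type} {n m : ℕ}

/-- One step of the parent map, viewed as a total function on places
(fixing the roots). -/
def up (G : PlaceGraph K V n m) : Plc V n m → Plc V n m
  | .inl c => parentToPlc (G.prnt c)
  | .inr r => .inr r

/-- `G.anc a b` iff `b ∈ prnt_G^*(a)`, i.e. `b` is an iterated parent of `a`. -/
def anc (G : PlaceGraph K V n m) (a b : Plc V n m) : Prop := ∃ k, G.up^[k] a = b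

/-- The finite set `prnt_G^*(a)` of iterated parents of `a` (the parent chain
stabilises within `|Plc|` steps). -/
def ancSet [Fintype V] [DecidableEq V] (G : PlaceGraph K V n m) (a : Plc V n m) :
    Finset (Plc V n m) :=
  (Finset.range (Fintype.card (Plc V n m) + 1)).image (fun k => G.up^[k] a)

/-- Number of children of a node. -/
noncomputable def deg (G : PlaceGraph K V n m) (v : V) : ℕ :=
  Nat.card {c : Fin n ⊕ V // G.prnt c = Sum.inl v}

end PlaceGraph

/-- The structure maps of a place graph embedding (Def. 7.5.4). -/
structure PGPre {K : Type} {Vg Vh : Type} {nG mG nH mH : ℕ}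
    (G : PlaceGraph K Vg nG mG) (H : PlaceGraph K Vh nH mH) where
  phiV : Vg → Vh
  phiS : Fin nG → Set (Fin nH ⊕ Vh)
  phiR : Fin mG → Vh ⊕ Fin mH

namespace PGPre

variable {K : Type} {Vg Vh : Type} {nG mG nH mH : ℕ}
  {G : PlaceGraph K Vg nG mG} {H : PlaceGraph K Vh nH mH}

/-- Combined child map `φ^c = φ^v ⊎ φ^s` (singletons for nodes). -/
def childMap (φ : PGPre G H) : (Fin nG ⊕ Vg) → Set (Fin nH ⊕ Vh) :=
  Sum.elim (fun s => φ.phiS s) (fun v => {Sum.inr (φ.phiV v)})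

/-- Combined parent map `φ^f = φ^v ⊎ φ^r`. -/
def parMap (φ : PGPre G H) : Vg ⊕ Fin mG → Vh ⊕ Fin mH :=
  Sum.elim (fun v => Sum.inl (φ.phiV v)) φ.phiR

end PGPre

/-- A place graph embedding (Def. 7.5.4): conditions PGE-1 .. PGE-8. -/
structure PGEmb {K : Type} {Vg Vh : Type} {nG mG nH mH : ℕ}
    (G : PlaceGraph K Vg nG mG) (H : PlaceGraph K Vh nH mH)
    extends PGPre G H where
  /-- PGE-1 -/
  pge1 : Function.Injective phiV
  /-- PGE-2: `φ^s` is fully injective. -/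
  pge2 : ∀ s s', s ≠ s' → phiS s ∩ phiS s' = ∅
  /-- PGE-4: `img φ^v ∩ img φ^r = ∅`. -/
  pge4a : ∀ v r, Sum.inl (phiV v) ≠ phiR r
  /-- PGE-4: `img φ^v ∩ ⋃ img φ^s = ∅`. -/
  pge4b : ∀ v s, Sum.inr (phiV v) ∉ phiS s
  /-- PGE-5: `prnt_H^*(φ^r r) ∩ φ^s s = ∅`. -/
  pge5 : ∀ (r : Fin mG) (s : Fin nG) (c : Fin nH ⊕ Vh), c ∈ phiS s →
    ¬ H.anc (parentToPlc (phiR r)) (Sum.inl c)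
  /-- PGE-6: `φ^c ∘ prnt_G⁻¹|V_G = prnt_H⁻¹ ∘ φ^v`. -/
  pge6 : ∀ (v : Vg) (c' : Fin nH ⊕ Vh),
    H.prnt c' = Sum.inl (phiV v) ↔ ∃ c : Fin nG ⊕ Vg, G.prnt c = Sum.inl v ∧ c' ∈ toPGPre.childMap c
  /-- PGE-7: controls are preserved. -/
  pge7 : ∀ v, H.ctrl (phiV v) = G.ctrl v
  /-- PGE-8: parents are preserved. -/
  pge8 : ∀ (c : Fin nG ⊕ Vg) (c' : Fin nH ⊕ Vh), c' ∈ toPGPre.childMap c →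
    toPGPre.parMap (G.prnt c) = H.prnt c'

open Finset in
/-- The constraint satisfaction problem PGE[G,H] (Figure 4), parameterised by the
set `act` of active controls: a solution is a boolean matrix `M` indexed by host
and guest places, subject to the constraint families (21)–(31). -/
structure PGESol {K : Type} {Vg Vh : Type} {nG mG nH mH : ℕ}
    [Fintype Vg] [Fintype Vh] [DecidableEq Vg] [DecidableEq Vh]
    (G : PlaceGraph K Vg nG mG) (H : PlaceGraph K Vh nH mH) (act : Set K) where
  M : Plc Vh nH mH → Plc Vg nG mG → ℕ
  /-- (21): variables are boolean. -/
  hM : ∀ h g, M h g ≤ 1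
  /-- (22): host roots match only guest roots. -/
  c1 : ∀ (r : Fin mH) (g : Fin nG ⊕ Vg), M (.inr r) (.inl g) = 0
  /-- (23): host sites match only guest sites (node part). -/
  c2a : ∀ (s : Fin nH) (v : Vg), M (.inl (.inl s)) (.inl (.inr v)) = 0
  /-- (23): host sites match only guest sites (root part). -/
  c2b : ∀ (s : Fin nH) (g : Fin mG), M (.inl (.inl s)) (.inr g) = 0
  /-- (24): control-mismatching nodes do not match. -/
  c3 : ∀ (v' : Vh) (v : Vg), H.ctrl v' ≠ G.ctrl v → M (.inl (.inr v')) (.inl (.inr v)) = 0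
  /-- (25): no match for guest roots under a passive host context. -/
  c4 : ∀ (g : Fin mG) (h : Vh) (v : Vh),
      H.anc (.inl (.inr h)) (.inl (.inr v)) → H.ctrl v ∉ act →
      M (.inl (.inr h)) (.inr g) = 0
  /-- (26): matches propagate from children to parents. -/
  c5 : ∀ (c : Fin nG ⊕ Vg) (c' : Fin nH ⊕ Vh),
      M (.inl c') (.inl c) ≤ M (parentToPlc (H.prnt c')) (parentToPlc (G.prnt c))
  /-- (27): each guest root has exactly one match (among host nodes and roots). -/
  c6 : ∀ g : Fin mG,
      (∑ v : Vh, M (.inl (.inr v)) (.inr g)) + (∑ r : Fin mH, M (.inr r) (.inr g)) = 1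
  /-- (28): each guest node has exactly one match (among host sites and nodes). -/
  c7 : ∀ v : Vg,
      (∑ s : Fin nH, M (.inl (.inl s)) (.inl (.inr v)))
        + (∑ v' : Vh, M (.inl (.inr v')) (.inl (.inr v))) = 1
  /-- (29): a host node matched with a node/site is matched with nothing else. -/
  c8 : ∀ h : Vh,
      mG * (∑ c : Fin nG ⊕ Vg, M (.inl (.inr h)) (.inl c))
        + (∑ g : Fin mG, M (.inl (.inr h)) (.inr g)) ≤ mG
  /-- (30): matches of nodes propagate from parents to children, covering. -/
  c9 : ∀ (g : Vg) (h : Vh),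
      H.deg h * M (.inl (.inr h)) (.inl (.inr g))
        ≤ ∑ c' : Fin nH ⊕ Vh, ∑ c : Fin nG ⊕ Vg,
            if H.prnt c' = .inl h ∧ G.prnt c = .inl g then M (.inl c') (.inl c) else 0
  /-- (31): matches of guest roots to host nodes cover the root's child nodes. -/
  c10 : ∀ (g : Fin mG) (h : Vh),
      (Finset.univ.filter (fun v : Vg => G.prnt (.inr v) = .inr g)).card
          * M (.inl (.inr h)) (.inr g)
        ≤ ∑ v' : Vh, ∑ v : Vg,
            if H.prnt (.inr v') = .inl h ∧ G.prnt (.inr v) = .inr g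
              then M (.inl (.inr v')) (.inl (.inr v)) else 0
  /-- (32): no match happens inside a parameter. -/
  c11 : ∀ (g : Vg) (h : Vh),
      M (.inl (.inr h)) (.inl (.inr g))
        + (∑ h' ∈ H.ancSet (.inl (.inr h)), ∑ g' : Fin mG, M h' (.inr g')) ≤ 1

/-- A concrete bigraph: a place graph and a link graph over the same nodes and
controls. -/
structure Bigraph (K : Type) (ar : K → ℕ) (V E : Type) (n m : ℕ) (X Y : Type) where
  ctrl : V → K
  prnt : Fin n ⊕ V → V ⊕ Fin m
  link : X ⊕ (Σ v : V, Fin (ar (ctrl v))) → E ⊕ Y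

namespace Bigraph
variable {K : Type} {ar : K → ℕ} {V E X Y : Type} {n m : ℕ}

/-- The underlying place graph `B^P`. -/
def placeG (B : Bigraph K ar V E n m X Y) : PlaceGraph K V n m := ⟨B.ctrl, B.prnt⟩

/-- The underlying link graph `B^L`. -/
def linkG (B : Bigraph K ar V E n m X Y) : LinkGraph K ar V E X Y := ⟨B.ctrl, B.link⟩

end Bigraph

/-- A bigraph embedding (Def. 7.5.14): a place graph embedding and a link graph
embedding sharing the node map, subject to the consistency condition BGE-1. -/
structure BGEmb {K : Type} {ar : K → ℕ} {Vg Eg Xg Yg Vh Eh Xh Yh : Type} {nG mG nH mH : ℕ}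
    (G : Bigraph K ar Vg Eg nG mG Xg Yg) (H : Bigraph K ar Vh Eh nH mH Xh Yh) where
  P : PGEmb G.placeG H.placeG
  L : LGEmb G.linkG H.linkG
  nodes_eq : P.phiV = L.phiV
  /-- BGE-1: points in the image of an inner name are host inner names or ports of
  nodes lying in the parameter (below the image of some guest site). -/
  bge1 : ∀ (x : Xg) (q : Xh ⊕ H.linkG.Port), q ∈ L.phiI x →
    (∃ x' : Xh, q = Sum.inl x') ∨
    (∃ (p : H.linkG.Port) (s : Fin nG) (k : ℕ) (c : Fin nH ⊕ Vh),
      q = Sum.inr p ∧ c ∈ P.phiS s ∧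
      H.placeG.up^[k] (Sum.inl (Sum.inr p.1)) = Sum.inl c)

/-- The constraint satisfaction problem BGE[G,H]: solutions of LGE[G^L,H^L] and
PGE[G^P,H^P] glued together by the two consistency constraint families of
Figure 5. -/
structure BGESol {K : Type} {ar : K → ℕ} {Vg Eg Xg Yg Vh Eh Xh Yh : Type} {nG mG nH mH : ℕ}
    [Fintype Vg] [Fintype Eg] [Fintype Xg] [Fintype Yg]
    [Fintype Vh] [Fintype Eh] [Fintype Xh] [Fintype Yh]
    [DecidableEq Vg] [DecidableEq Eg] [DecidableEq Xg] [DecidableEq Yg]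
    [DecidableEq Vh] [DecidableEq Eh] [DecidableEq Xh] [DecidableEq Yh]
    (G : Bigraph K ar Vg Eg nG mG Xg Yg) (H : Bigraph K ar Vh Eh nH mH Xh Yh)
    (act : Set K) where
  L : LGESol G.linkG H.linkG
  P : PGESol G.placeG H.placeG act
  /-- (33): the two solutions agree on nodes. -/
  glue1 : ∀ (v : Vg) (v' : Vh) (k : Fin (ar (G.ctrl v))) (k' : Fin (ar (H.ctrl v'))),
    (k : ℕ) = (k' : ℕ) →
    P.M (.inl (.inr v')) (.inl (.inr v)) = L.N3 (Sum.inr ⟨v', k'⟩) (Sum.inr ⟨v, k⟩)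
  /-- (34): a host port sends flux to a guest inner name only if its node lies in
  the parameter. -/
  glue2 : ∀ p : H.linkG.Port,
    (∑ x : Xg, L.N3 (Sum.inr p) (Sum.inl x))
      ≤ ∑ h' ∈ H.placeG.ancSet (.inl (.inr p.1)), ∑ g : Fin nG, P.M h' (.inl (.inl g))
variable {K : Type} {ar : K → ℕ} {Vg Eg Xg Yg Vh Eh Xh Yh : Type} {nG mG nH mH : ℕ}
    [Fintype Vg] [Fintype Eg] [Fintype Xg] [Fintype Yg]
    [Fintype Vh] [Fintype Eh] [Fintype Xh] [Fintype Yh]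
    [DecidableEq Vg] [DecidableEq Eg] [DecidableEq Xg] [DecidableEq Yg]
    [DecidableEq Vh] [DecidableEq Eh] [DecidableEq Xh] [DecidableEq Yh]

/-! Fix a host port `p = (v, i)`. By LGE-(9) the row of `N` at `p` carries at most one `1`
among the guest inner names, so the gluing inequality at `p` is only binding when
`p ∈ φ^i(x)` for some `x`, and then it asks for a nonzero site column of `M` at some
`h ∈ prnt_H^*(v)`. By PGE-(21),(22) such an entry is a `1` at a host site or node, which is
exactly the witness BGE-1 asks for. The finite set `ancSet` contains all iterated parents
because the parent chain in the finite set of places repeats within `|Plc|` steps. -/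

theorem Function.exists_le_card_iterate_eq {α : Type*} [Fintype α] (f : α → α) (a : α)
    (k : ℕ) : ∃ k' ≤ Fintype.card α, f^[k'] a = f^[k] a := by
  induction k using Nat.strong_induction_on with
  | _ k ih =>
  by_cases hk : k ≤ Fintype.card α
  · exact ⟨k, hk, rfl⟩
  obtain ⟨i, j, hne, hij⟩ := Fintype.exists_ne_map_eq_of_card_lt
    (fun i : Fin (Fintype.card α + 1) => f^[i] a) (by simp)
  wlog hlt : (i : ℕ) < j generalizing i j
  · exact this j i hne.symm hij.symm (by omega)
  -- the orbit repeats with period `j - i` from step `i` on, so `k` can be shortened by it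
  obtain ⟨k', hk', hk'eq⟩ := ih (k - (j - i)) (by omega)
  refine ⟨k', hk', hk'eq.trans ?_⟩
  calc f^[k - (j - i)] a = f^[k - j] (f^[i] a) := by
        rw [← Function.iterate_add_apply]; congr 1; omega
    _ = f^[k - j] (f^[j] a) := by rw [hij]
    _ = f^[k] a := by rw [← Function.iterate_add_apply]; congr 1; omega

theorem PlaceGraph.mem_ancSet_iff {V : Type} {n m : ℕ} [Fintype V] [DecidableEq V]
    (G : PlaceGraph K V n m) (a b : Plc V n m) : b ∈ G.ancSet a ↔ G.anc a b := by
  refine ⟨fun hb => ?_, fun ⟨k, hk⟩ => ?_⟩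
  · obtain ⟨k, -, hk⟩ := Finset.mem_image.mp hb
    exact ⟨k, hk⟩
  · obtain ⟨k', hk', hk'eq⟩ := Function.exists_le_card_iterate_eq G.up a k
    exact Finset.mem_image.mpr ⟨k', Finset.mem_range.mpr (Nat.lt_succ_of_le hk'), hk'eq.trans hk⟩

theorem Finset.sum_le_iff_of_sum_le_one {ι : Type*} {s : Finset ι} {f : ι → ℕ}
    (hf : ∑ i ∈ s, f i ≤ 1) (n : ℕ) : ∑ i ∈ s, f i ≤ n ↔ ∀ i ∈ s, f i = 1 → 1 ≤ n := by
  refine ⟨fun h i hi hfi => hfi ▸ (Finset.single_le_sum (by simp) hi).trans h, fun h => ?_⟩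
  rcases Nat.le_one_iff_eq_zero_or_eq_one.mp hf with h0 | h1
  · omega
  obtain ⟨i, hi, hfi⟩ := Finset.exists_ne_zero_of_sum_ne_zero (h1 ▸ one_ne_zero)
  have hfi1 : f i = 1 := le_antisymm ((Finset.single_le_sum (by simp) hi).trans hf) (by omega)
  exact h1 ▸ h i hi hfi1

theorem LGESol.sum_N3_inl_le_one {G : LinkGraph K ar Vg Eg Xg Yg}
    {H : LinkGraph K ar Vh Eh Xh Yh} (L : LGESol G H) (p : H.Point) :
    ∑ x : Xg, L.N3 p (Sum.inl x) ≤ 1 := by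
  have h := L.c1 p
  rw [Fintype.sum_sum_type] at h
  omega

theorem PGESol.one_le_sum_ancSet_sites_iff {act : Set K} {G : PlaceGraph K Vg nG mG}
    {H : PlaceGraph K Vh nH mH} (P : PGESol G H act) (a : Plc Vh nH mH) :
    1 ≤ ∑ h ∈ H.ancSet a, ∑ s : Fin nG, P.M h (.inl (.inl s)) ↔
      ∃ (s : Fin nG) (k : ℕ) (c : Fin nH ⊕ Vh),
        P.M (.inl c) (.inl (.inl s)) = 1 ∧ H.up^[k] a = .inl c := by
  constructor
  · intro h
    obtain ⟨h', hh', hsum⟩ := Finset.exists_ne_zero_of_sum_ne_zero (Nat.one_le_iff_ne_zero.mp h)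
    obtain ⟨s, -, hs⟩ := Finset.exists_ne_zero_of_sum_ne_zero hsum
    obtain ⟨k, hk⟩ := (H.mem_ancSet_iff a h').mp hh'
    rcases h' with c | r
    · exact ⟨s, k, c, le_antisymm (P.hM _ _) (Nat.one_le_iff_ne_zero.mpr hs), hk⟩
    · exact absurd (P.c1 r (.inl s)) hs
  · rintro ⟨s, k, c, hM, hk⟩
    calc 1 = P.M (.inl c) (.inl (.inl s)) := hM.symm
      _ ≤ ∑ s' : Fin nG, P.M (.inl c) (.inl (.inl s')) :=
          Finset.single_le_sum (f := fun s' => P.M (.inl c) (.inl (.inl s'))) (by simp)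
            (Finset.mem_univ s)
      _ ≤ _ := Finset.single_le_sum (f := fun h => ∑ s' : Fin nG, P.M h (.inl (.inl s')))
          (by simp) ((H.mem_ancSet_iff a _).mpr ⟨k, hk⟩)

theorem bge_gluing_iff_bge1_general
    (G : Bigraph K ar Vg Eg nG mG Xg Yg) (H : Bigraph K ar Vh Eh nH mH Xh Yh)
    (act : Set K)
    (L : LGESol G.linkG H.linkG) (P : PGESol G.placeG H.placeG act) :
    (∀ p : H.linkG.Port,
        (∑ x : Xg, L.N3 (Sum.inr p) (Sum.inl x))
          ≤ ∑ h' ∈ H.placeG.ancSet (.inl (.inr p.1)), ∑ g : Fin nG, P.M h' (.inl (.inl g)))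
      ↔
    (∀ (x : Xg) (q : Xh ⊕ H.linkG.Port), L.N3 q (Sum.inl x) = 1 →
        (∃ x' : Xh, q = Sum.inl x') ∨
        (∃ (p : H.linkG.Port) (s : Fin nG) (k : ℕ) (c : Fin nH ⊕ Vh),
          q = Sum.inr p ∧ P.M (.inl c) (.inl (.inl s)) = 1 ∧
          H.placeG.up^[k] (Sum.inl (Sum.inr p.1)) = Sum.inl c)) := by
  have hport : ∀ p : H.linkG.Port,
      (∑ x : Xg, L.N3 (Sum.inr p) (Sum.inl x)
          ≤ ∑ h' ∈ H.placeG.ancSet (.inl (.inr p.1)), ∑ g : Fin nG, P.M h' (.inl (.inl g))) ↔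
        ∀ x : Xg, L.N3 (Sum.inr p) (Sum.inl x) = 1 →
          ∃ (s : Fin nG) (k : ℕ) (c : Fin nH ⊕ Vh), P.M (.inl c) (.inl (.inl s)) = 1 ∧
            H.placeG.up^[k] (Sum.inl (Sum.inr p.1)) = Sum.inl c := by
    intro p
    rw [Finset.sum_le_iff_of_sum_le_one (L.sum_N3_inl_le_one _), P.one_le_sum_ancSet_sites_iff]
    simp only [Finset.mem_univ, true_implies]
  simp only [hport]
  constructor
  · rintro h x (x' | p) hx
    · exact .inl ⟨x', rfl⟩
    · obtain ⟨s, k, c, hM, hk⟩ := h p x hx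
      exact .inr ⟨p, s, k, c, rfl, hM, hk⟩
  · intro h p x hx
    rcases h x (.inr p) hx with ⟨x', hx'⟩ | ⟨p', s, k, c, hp, hM, hk⟩
    · cases hx'
    · cases hp
      exact ⟨s, k, c, hM, hk⟩

/-- For a combined solution of LGE and PGE with matching node maps,
the gluing constraint `Σ_{p' ∈ X_G} N_{(v,k),p'} ≤ Σ_{h ∈ prnt_H^*(v), g ∈ n_G} M_{h,g}`
(for every host port `(v,k)`) holds if and only if the extracted embedding maps
satisfy condition BGE-1: `img φ^i ⊆ X_H ⊎ {(v,i) ∈ P_H | ∃ s ∈ n_G, k ∈ ℕ,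
prnt_H^k(v) ∈ φ^s(s)}`, where `φ^i x = {p | N_{p,x} = 1}` and
`φ^s s = {c | M_{c,s} = 1}`. -/
theorem bge_gluing_iff_bge1
    (G : Bigraph K ar Vg Eg nG mG Xg Yg) (H : Bigraph K ar Vh Eh nH mH Xh Yh)
    (act : Set K)
    (L : LGESol G.linkG H.linkG) (P : PGESol G.placeG H.placeG act)
    (glue1 : ∀ (v : Vg) (v' : Vh) (k : Fin (ar (G.ctrl v))) (k' : Fin (ar (H.ctrl v'))),
      (k : ℕ) = (k' : ℕ) →
      P.M (.inl (.inr v')) (.inl (.inr v)) = L.N3 (Sum.inr ⟨v', k'⟩) (Sum.inr ⟨v, k⟩)) :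
    (∀ p : H.linkG.Port,
        (∑ x : Xg, L.N3 (Sum.inr p) (Sum.inl x))
          ≤ ∑ h' ∈ H.placeG.ancSet (.inl (.inr p.1)), ∑ g : Fin nG, P.M h' (.inl (.inl g)))
      ↔
    (∀ (x : Xg) (q : Xh ⊕ H.linkG.Port), L.N3 q (Sum.inl x) = 1 →
        (∃ x' : Xh, q = Sum.inl x') ∨
        (∃ (p : H.linkG.Port) (s : Fin nG) (k : ℕ) (c : Fin nH ⊕ Vh),
          q = Sum.inr p ∧ P.M (.inl c) (.inl (.inl s)) = 1 ∧
          H.placeG.up^[k] (Sum.inl (Sum.inr p.1)) = Sum.inl c)) :=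
  bge_gluing_iff_bge1_general G H act L P
end
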